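/- arXiv:2604.02909 — 2 statements merged into one kernel-verified Lean document; each statement's English description precedes it below -/
import Mathlib

section
/- Let E₁, E₂ be C¹, strictly increasing, strictly concave on [0,∞) with E₁(0) = E₂(0) = 0 and E₁'(0)·E₂'(0) = 1. Then the concave continuation F (with F(x) = E₁(x) for x ≥ 0 and F(x) = −E₂^{-1}(−x) for x < 0) is strictly increasing and concave on its full domain (−R, ∞), where R = sup range E₂. -/
/-!
On `[0, ∞)` the continuation is `E₁`; on `(-R, 0]` it is `x ↦ -E₂⁻¹(-x)`, the reflection of the
inverse of an increasing concave function, which is convex. Two concave pieces meeting at `0` glue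
to a concave function as soon as every chord slope to the right of `0` is at most every chord
slope to the left of it. By concavity the right slopes `E₁ y / y` are at most `E₁'(0)`, while the
left slopes are reciprocals `t / E₂ t` of slopes of `E₂`, hence at least `1 / E₂'(0) = E₁'(0)`.
-/

open Set

section Glue

variable {𝕜 : Type*} [Field 𝕜] [LinearOrder 𝕜] [IsStrictOrderedRing 𝕜] {f : 𝕜 → 𝕜}

theorem slope_outer_le_slope_left_of_slope_le {a b c : 𝕜} (hab : a < b) (hbc : b < c)
    (h : slope f b c ≤ slope f a b) : slope f a c ≤ slope f a b := by
  rw [slope_def_field, slope_def_field] at h ⊢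
  rw [div_le_div_iff₀ (by linarith) (by linarith)] at h ⊢
  linear_combination h

theorem slope_right_le_slope_outer_of_slope_le {a b c : 𝕜} (hab : a < b) (hbc : b < c)
    (h : slope f b c ≤ slope f a b) : slope f b c ≤ slope f a c := by
  rw [slope_def_field, slope_def_field] at h ⊢
  rw [div_le_div_iff₀ (by linarith) (by linarith)] at h ⊢
  linear_combination h

theorem ConcaveOn.of_inter_Iic_of_inter_Ici {s : Set 𝕜} {c : 𝕜} (hs : Convex 𝕜 s)
    (hl : ConcaveOn 𝕜 (s ∩ Iic c) f) (hr : ConcaveOn 𝕜 (s ∩ Ici c) f)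
    (hc : ∀ x ∈ s, ∀ y ∈ s, x < c → c < y → slope f c y ≤ slope f x c) :
    ConcaveOn 𝕜 s f := by
  have anti : ∀ {t : Set 𝕜}, ConcaveOn 𝕜 t f → ∀ {x y z}, x ∈ t → z ∈ t → x < y → y < z →
      slope f y z ≤ slope f x y := fun ht _ _ _ hx hz hxy hyz => by
    simpa only [slope_def_field] using ht.slope_anti_adjacent hx hz hxy hyz
  refine concaveOn_of_slope_anti_adjacent hs fun {x y z} hx hz hxy hyz => ?_
  simp only [← slope_def_field]
  have hmem : ∀ {w}, x ≤ w → w ≤ z → w ∈ s := fun hxw hwz => hs.ordConnected.out hx hz ⟨hxw, hwz⟩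
  rcases le_or_gt z c with hzc | hcz
  · exact anti hl ⟨hx, hxy.le.trans (hyz.le.trans hzc)⟩ ⟨hz, hzc⟩ hxy hyz
  rcases le_or_gt c x with hcx | hxc
  · exact anti hr ⟨hx, hcx⟩ ⟨hz, hcx.trans (hxy.le.trans hyz.le)⟩ hxy hyz
  have hcs : c ∈ s := hmem hxc.le hcz.le
  rcases lt_trichotomy y c with hyc | rfl | hcy
  · calc slope f y z ≤ slope f y c :=
          slope_outer_le_slope_left_of_slope_le hyc hcz (hc y (hmem hxy.le hyz.le) z hz hyc hcz)
      _ ≤ slope f x y := anti hl ⟨hx, hxc.le⟩ ⟨hcs, le_rfl⟩ hxy hyc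
  · exact hc x hx z hz hxy hyz
  · calc slope f y z ≤ slope f c y := anti hr ⟨hcs, le_rfl⟩ ⟨hz, hcz.le⟩ hcy hyz
      _ ≤ slope f x y :=
          slope_right_le_slope_outer_of_slope_le hxc hcy (hc x hx y (hmem hxy.le hyz.le) hxc hcy)

end Glue

theorem StrictMonoOn.of_inter_Iic_of_inter_Ici {α β : Type*} [LinearOrder α] [Preorder β]
    {f : α → β} {s : Set α} {c : α} (hs : s.OrdConnected)
    (hl : StrictMonoOn f (s ∩ Iic c)) (hr : StrictMonoOn f (s ∩ Ici c)) : StrictMonoOn f s := by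
  intro x hx y hy hxy
  rcases le_or_gt y c with hyc | hcy
  · exact hl ⟨hx, hxy.le.trans hyc⟩ ⟨hy, hyc⟩ hxy
  rcases le_or_gt c x with hcx | hxc
  · exact hr ⟨hx, hcx⟩ ⟨hy, hcx.trans hxy.le⟩ hxy
  have hcs : c ∈ s := hs.out hx hy ⟨hxc.le, hcy.le⟩
  exact (hl ⟨hx, hxc.le⟩ ⟨hcs, le_rfl⟩ hxc).trans (hr ⟨hcs, le_rfl⟩ ⟨hy, hcy.le⟩ hcy)

theorem StrictMonoOn.strictMonoOn_image_of_leftInvOn {α β : Type*} [LinearOrder α] [Preorder β]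
    {g : α → β} {h : β → α} {s : Set α} (hg : StrictMonoOn g s) (hgh : LeftInvOn h g s) :
    StrictMonoOn h (g '' s) := by
  rintro _ ⟨p, hp, rfl⟩ _ ⟨q, hq, rfl⟩ hpq
  rw [hgh hp, hgh hq]
  exact (hg.lt_iff_lt hp hq).1 hpq

theorem ConcaveOn.convexOn_image_of_leftInvOn {𝕜 α β : Type*} [Semiring 𝕜] [PartialOrder 𝕜]
    [AddCommMonoid α] [LinearOrder α] [SMul 𝕜 α] [AddCommMonoid β] [PartialOrder β] [SMul 𝕜 β]
    {g : α → β} {h : β → α} {s : Set α} (hconc : ConcaveOn 𝕜 s g) (hg : StrictMonoOn g s)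
    (hgh : LeftInvOn h g s) (himg : Convex 𝕜 (g '' s)) : ConvexOn 𝕜 (g '' s) h := by
  refine ⟨himg, ?_⟩
  rintro _ ⟨p, hp, rfl⟩ _ ⟨q, hq, rfl⟩ a b ha hb hab
  obtain ⟨r, hr, hgr⟩ := himg ⟨p, hp, rfl⟩ ⟨q, hq, rfl⟩ ha hb hab
  rw [← hgr, hgh hr, hgh hp, hgh hq, ← hg.le_iff_le hr (hconc.1 hp hq ha hb hab), hgr]
  exact hconc.2 hp hq ha hb hab

theorem StrictMonoOn.neg_comp_neg {α β : Type*} [AddCommGroup α] [PartialOrder α]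
    [IsOrderedAddMonoid α] [AddCommGroup β] [PartialOrder β] [IsOrderedAddMonoid β]
    {h : α → β} {s : Set α}
    (hh : StrictMonoOn h s) : StrictMonoOn (fun x => -h (-x)) (-s) :=
  fun _ hx _ hy hxy => neg_lt_neg (hh hy hx (neg_lt_neg hxy))

theorem ConvexOn.concaveOn_neg_comp_neg {𝕜 E β : Type*} [Ring 𝕜] [PartialOrder 𝕜]
    [AddCommGroup E] [Module 𝕜 E] [AddCommGroup β] [PartialOrder β] [IsOrderedAddMonoid β]
    [Module 𝕜 β] {s : Set E} {h : E → β} (hh : ConvexOn 𝕜 s h) :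
    ConcaveOn 𝕜 (-s) fun x => -h (-x) :=
  (hh.comp_linearMap (-LinearMap.id)).neg

theorem Set.OrdConnected.Ico_csSup_subset {α : Type*} [ConditionallyCompleteLinearOrder α]
    {S : Set α} (hS : S.OrdConnected) {a : α} (ha : a ∈ S) : Ico a (sSup S) ⊆ S := by
  rintro w ⟨haw, hw⟩
  obtain ⟨b, hb, hwb⟩ := exists_lt_of_lt_csSup ⟨a, ha⟩ hw
  exact hS.out ha hb ⟨haw, hwb.le⟩

theorem slope_le_inv_slope_of_derivWithin_mul_eq_one {E₁ E₂ : ℝ → ℝ}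
    (hconc₁ : ConcaveOn ℝ (Ici 0) E₁) (hconc₂ : ConcaveOn ℝ (Ici 0) E₂)
    (hd₁ : DifferentiableWithinAt ℝ E₁ (Ici 0) 0) (hd₂ : DifferentiableWithinAt ℝ E₂ (Ici 0) 0)
    (hnum : derivWithin E₁ (Ici 0) 0 * derivWithin E₂ (Ici 0) 0 = 1)
    (hmono₂ : StrictMonoOn E₂ (Ici 0)) {s t : ℝ} (hs : 0 < s) (ht : 0 < t) :
    slope E₁ 0 s ≤ (slope E₂ 0 t)⁻¹ :=
  calc slope E₁ 0 s ≤ derivWithin E₁ (Ici 0) 0 :=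
        hconc₁.slope_le_derivWithin self_mem_Ici hs.le hs hd₁
    _ = (derivWithin E₂ (Ici 0) 0)⁻¹ := eq_inv_of_mul_eq_one_left hnum
    _ ≤ (slope E₂ 0 t)⁻¹ :=
        inv_anti₀ (hmono₂.slope_pos self_mem_Ici ht.le ht.ne)
          (hconc₂.slope_le_derivWithin self_mem_Ici ht.le ht hd₂)

theorem concave_continuation_strictMono_concave_general
    (E₁ E₂ E₂inv F : ℝ → ℝ)
    (hC1₁ : ContDiffOn ℝ 1 E₁ (Set.Ici 0))
    (hC1₂ : ContDiffOn ℝ 1 E₂ (Set.Ici 0))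
    (hmono₁ : StrictMonoOn E₁ (Set.Ici 0))
    (hmono₂ : StrictMonoOn E₂ (Set.Ici 0))
    (hconc₁ : StrictConcaveOn ℝ (Set.Ici 0) E₁)
    (hconc₂ : StrictConcaveOn ℝ (Set.Ici 0) E₂)
    (h₁0 : E₁ 0 = 0) (h₂0 : E₂ 0 = 0)
    (hnum : derivWithin E₁ (Set.Ici 0) 0 * derivWithin E₂ (Set.Ici 0) 0 = 1)
    (hinv_left : ∀ y ∈ Set.Ici (0 : ℝ), E₂inv (E₂ y) = y)
    (hF : ∀ x, F x = if 0 ≤ x then E₁ x else -E₂inv (-x))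
    (R : ℝ) (hR : R = sSup (E₂ '' Set.Ici 0)) :
    StrictMonoOn F (Set.Ioi (-R)) ∧ ConcaveOn ℝ (Set.Ioi (-R)) F := by
  have himg : (E₂ '' Ici 0).OrdConnected :=
    (isPreconnected_Ici.image E₂ hC1₂.continuousOn).ordConnected
  have hIco : Ico 0 R ⊆ E₂ '' Ici 0 := hR ▸ himg.Ico_csSup_subset ⟨0, self_mem_Ici, h₂0⟩
  have hsub : Ioi (-R) ∩ Iic 0 ⊆ -(E₂ '' Ici 0) := fun x hx =>
    hIco ⟨neg_nonneg.2 hx.2, neg_lt.1 hx.1⟩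
  have hleft : EqOn (fun x => -E₂inv (-x)) F (Ioi (-R) ∩ Iic 0) := by
    intro x hx
    rw [hF]
    split_ifs with h
    · obtain rfl : x = 0 := le_antisymm hx.2 h
      simpa [h₁0, h₂0] using hinv_left 0 self_mem_Ici
    · rfl
  have hright : EqOn E₁ F (Ioi (-R) ∩ Ici 0) := fun x hx => by rw [hF, if_pos (mem_Ici.1 hx.2)]
  refine ⟨StrictMonoOn.of_inter_Iic_of_inter_Ici (c := 0) ordConnected_Ioi ?_ ?_,
    ConcaveOn.of_inter_Iic_of_inter_Ici (c := 0) (convex_Ioi _) ?_ ?_ ?_⟩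
  · exact ((hmono₂.strictMonoOn_image_of_leftInvOn hinv_left).neg_comp_neg.mono hsub).congr hleft
  · exact (hmono₁.mono inter_subset_right).congr hright
  · exact (((hconc₂.concaveOn.convexOn_image_of_leftInvOn hmono₂ hinv_left
      himg.convex).concaveOn_neg_comp_neg).subset hsub ((convex_Ioi _).inter (convex_Iic _))).congr
      hleft
  · exact (hconc₁.concaveOn.subset inter_subset_right ((convex_Ioi _).inter (convex_Ici _))).congr
      hright
  · intro x hx y _ hx0 hy0
    obtain ⟨t, ht, hEt⟩ := hsub ⟨hx, hx0.le⟩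
    have ht0 : 0 < t := lt_of_le_of_ne ht (by rintro rfl; linarith)
    have hF0 : F 0 = 0 := by rw [hF, if_pos le_rfl, h₁0]
    have hFx : F x = -t := by rw [hF, if_neg hx0.not_ge, ← hEt, hinv_left t ht]
    calc slope F 0 y = slope E₁ 0 y := by
          rw [slope_def_field, slope_def_field, hF0, h₁0, hF y, if_pos hy0.le]
      _ ≤ (slope E₂ 0 t)⁻¹ := slope_le_inv_slope_of_derivWithin_mul_eq_one hconc₁.concaveOn
          hconc₂.concaveOn (hC1₁.differentiableOn one_ne_zero 0 self_mem_Ici)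
          (hC1₂.differentiableOn one_ne_zero 0 self_mem_Ici) hnum hmono₂ hy0 ht0
      _ = slope F x 0 := by
          rw [slope_def_field, slope_def_field, hF0, hFx, h₂0, hEt, inv_div]
          ring

/-- The concave continuation `F` (with `F(x) = E₁(x)` for `x ≥ 0` and
`F(x) = −E₂⁻¹(−x)` for `x < 0`) is strictly increasing and concave on its full domain
`(−R, ∞)`, where `R = sup (range of E₂ on [0,∞))`. -/
theorem concave_continuation_strictMono_concave
    (E₁ E₂ E₂inv F : ℝ → ℝ)
    (hC1₁ : ContDiffOn ℝ 1 E₁ (Set.Ici 0))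
    (hC1₂ : ContDiffOn ℝ 1 E₂ (Set.Ici 0))
    (hmono₁ : StrictMonoOn E₁ (Set.Ici 0))
    (hmono₂ : StrictMonoOn E₂ (Set.Ici 0))
    (hconc₁ : StrictConcaveOn ℝ (Set.Ici 0) E₁)
    (hconc₂ : StrictConcaveOn ℝ (Set.Ici 0) E₂)
    (hnn₁ : ∀ x ∈ Set.Ici (0 : ℝ), 0 ≤ E₁ x)
    (hnn₂ : ∀ x ∈ Set.Ici (0 : ℝ), 0 ≤ E₂ x)
    (h₁0 : E₁ 0 = 0) (h₂0 : E₂ 0 = 0)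
    (hnum : derivWithin E₁ (Set.Ici 0) 0 * derivWithin E₂ (Set.Ici 0) 0 = 1)
    (hinv_left : ∀ y ∈ Set.Ici (0 : ℝ), E₂inv (E₂ y) = y)
    (hinv_mem : ∀ x ∈ E₂ '' Set.Ici (0 : ℝ), E₂inv x ∈ Set.Ici (0 : ℝ))
    (hF : ∀ x, F x = if 0 ≤ x then E₁ x else -E₂inv (-x))
    (R : ℝ) (hR : R = sSup (E₂ '' Set.Ici 0)) :
    StrictMonoOn F (Set.Ioi (-R)) ∧ ConcaveOn ℝ (Set.Ioi (-R)) F :=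
  concave_continuation_strictMono_concave_general E₁ E₂ E₂inv F hC1₁ hC1₂ hmono₁ hmono₂ hconc₁
    hconc₂ h₁0 h₂0 hnum hinv_left hF R hR
end

section
/- Legitimate transfers do not decrease the objective: if E₁, E₂ are concave differentiable, P_i = 1/E_i', and a transfer of δ > 0 from pool 1 to pool 2 satisfies the legitimacy condition P₁(x₁ − δ) ≥ P₂(x₂ + δ) and initially P₁(x₁) > P₂(x₂), then E₁(x₁ − δ) + E₂(x₂ + δ) ≥ E₁(x₁) + E₂(x₂), with strict inequality if E₁, E₂ are strictly concave. -/
/-!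
Tangent lines at the post-transfer allocations bound the loss of pool 1 by `δ E₁'(x₁ - δ)` from
above and the gain of pool 2 by `δ E₂'(x₂ + δ)` from below, and for positive derivatives
legitimacy says exactly `E₁'(x₁ - δ) ≤ E₂'(x₂ + δ)`. Strict concavity makes both tangent-line
bounds strict.
-/

open Set

section TangentLine

variable {S : Set ℝ} {f : ℝ → ℝ} {x y : ℝ}

theorem ConcaveOn.le_add_deriv_mul_sub (hf : ConcaveOn ℝ S f) (hx : x ∈ S) (hy : y ∈ S)
    (hfy : DifferentiableAt ℝ f y) : f x ≤ f y + deriv f y * (x - y) := by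
  rcases lt_trichotomy x y with hxy | rfl | hxy
  · have h := hf.deriv_le_slope hx hy hxy hfy
    rw [slope_def_field, le_div_iff₀ (sub_pos.2 hxy)] at h
    linarith
  · simp
  · have h := hf.slope_le_deriv hy hx hxy hfy
    rw [slope_def_field, div_le_iff₀ (sub_pos.2 hxy)] at h
    linarith

theorem StrictConcaveOn.lt_add_deriv_mul_sub (hf : StrictConcaveOn ℝ S f) (hx : x ∈ S)
    (hy : y ∈ S) (hxy : x ≠ y) (hfy : DifferentiableAt ℝ f y) :
    f x < f y + deriv f y * (x - y) := by
  rcases hxy.lt_or_gt with hxy | hxy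
  · have h := hf.deriv_lt_slope hx hy hxy hfy
    rw [slope_def_field, lt_div_iff₀ (sub_pos.2 hxy)] at h
    linarith
  · have h := hf.slope_lt_deriv hy hx hxy hfy
    rw [slope_def_field, div_lt_iff₀ (sub_pos.2 hxy)] at h
    linarith

end TangentLine

theorem legitimate_transfer_improves_general
    (E₁ E₂ : ℝ → ℝ)
    (hdiff₁ : Differentiable ℝ E₁) (hconc₁ : ConcaveOn ℝ Set.univ E₁)
    (hpos₁ : ∀ x, 0 < deriv E₁ x)
    (hdiff₂ : Differentiable ℝ E₂) (hconc₂ : ConcaveOn ℝ Set.univ E₂)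
    (hpos₂ : ∀ x, 0 < deriv E₂ x)
    (x₁ x₂ δ : ℝ) (hδ : 0 < δ)
    (hleg : 1 / deriv E₂ (x₂ + δ) ≤ 1 / deriv E₁ (x₁ - δ)) :
    E₁ x₁ + E₂ x₂ ≤ E₁ (x₁ - δ) + E₂ (x₂ + δ) ∧
    (StrictConcaveOn ℝ Set.univ E₁ → StrictConcaveOn ℝ Set.univ E₂ →
      E₁ x₁ + E₂ x₂ < E₁ (x₁ - δ) + E₂ (x₂ + δ)) := by
  have hderiv : deriv E₁ (x₁ - δ) ≤ deriv E₂ (x₂ + δ) :=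
    (one_div_le_one_div (hpos₂ _) (hpos₁ _)).1 hleg
  have hmarginal : δ * deriv E₁ (x₁ - δ) ≤ δ * deriv E₂ (x₂ + δ) :=
    mul_le_mul_of_nonneg_left hderiv hδ.le
  refine ⟨?_, fun hstrict₁ hstrict₂ => ?_⟩
  · have hloss := hconc₁.le_add_deriv_mul_sub (mem_univ x₁) (mem_univ (x₁ - δ)) (hdiff₁ _)
    have hgain := hconc₂.le_add_deriv_mul_sub (mem_univ x₂) (mem_univ (x₂ + δ)) (hdiff₂ _)
    linarith
  · have hloss := hstrict₁.lt_add_deriv_mul_sub (mem_univ x₁) (mem_univ (x₁ - δ))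
      (by linarith) (hdiff₁ _)
    have hgain := hstrict₂.lt_add_deriv_mul_sub (mem_univ x₂) (mem_univ (x₂ + δ))
      (by linarith) (hdiff₂ _)
    linarith

/-- Legitimate transfers do not decrease the objective: if `E₁, E₂` are concave
differentiable with prices `P_i = 1/E_i'`, `P₁(x₁) > P₂(x₂)` initially, and the
transfer `δ > 0` is legitimate (`P₁(x₁ − δ) ≥ P₂(x₂ + δ)`), then
`E₁(x₁ − δ) + E₂(x₂ + δ) ≥ E₁(x₁) + E₂(x₂)`, with strict inequality when `E₁, E₂`
are strictly concave. -/
theorem legitimate_transfer_improves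
    (E₁ E₂ : ℝ → ℝ)
    (hdiff₁ : Differentiable ℝ E₁) (hconc₁ : ConcaveOn ℝ Set.univ E₁)
    (hpos₁ : ∀ x, 0 < deriv E₁ x)
    (hdiff₂ : Differentiable ℝ E₂) (hconc₂ : ConcaveOn ℝ Set.univ E₂)
    (hpos₂ : ∀ x, 0 < deriv E₂ x)
    (x₁ x₂ δ : ℝ) (hδ : 0 < δ)
    (hprice : 1 / deriv E₂ x₂ < 1 / deriv E₁ x₁)
    (hleg : 1 / deriv E₂ (x₂ + δ) ≤ 1 / deriv E₁ (x₁ - δ)) :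
    E₁ x₁ + E₂ x₂ ≤ E₁ (x₁ - δ) + E₂ (x₂ + δ) ∧
    (StrictConcaveOn ℝ Set.univ E₁ → StrictConcaveOn ℝ Set.univ E₂ →
      E₁ x₁ + E₂ x₂ < E₁ (x₁ - δ) + E₂ (x₂ + δ)) :=
  legitimate_transfer_improves_general E₁ E₂ hdiff₁ hconc₁ hpos₁ hdiff₂ hconc₂ hpos₂ x₁ x₂ δ hδ hleg
end
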